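/- arXiv:1606.03414 — 4 statements merged into one kernel-verified Lean document; each statement's English description precedes it below -/
import Mathlib

section
/- Let m ≥ 1 and let b₁, …, b_m : ℕ → ℤ be sequences with b_j(0) = b_j(1) = 0 for every j. Define sequences B₁, …, B_m : ℕ → ℤ recursively by B₁(n) = b₁(n) and, for 2 ≤ j ≤ m, B_j(n) = Σ_{l=2}^{n−2} ( b_j(l) − b_j(l−1) ) · B_{j−1}(n−l). Then for every n, B_m(n) = Σ_{i=0}^{m−1} (−1)^i · C(m−1, i) · Σ_{(l₁,…,l_m) : l₁+⋯+l_m = n−i, each l_j ≥ 2} b₁(l₁) · b₂(l₂) ⋯ b_m(l_m), where C(m−1, i) is the binomial coefficient and the inner sum runs over all m-tuples of natural numbers, each at least 2, summing to n−i. -/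
open Finset

private def Sset (j k : ℕ) : Finset (Fin j → ℕ) :=
  (Finset.Nat.antidiagonalTuple j k).filter (fun l => ∀ i, 2 ≤ l i)

private lemma mem_Sset {j k : ℕ} {l : Fin j → ℕ} :
    l ∈ Sset j k ↔ (∑ i, l i = k ∧ ∀ i, 2 ≤ l i) := by
  simp [Sset, Finset.Nat.mem_antidiagonalTuple]

private def Sfun (b : ℕ → ℕ → ℤ) (j k : ℕ) : ℤ :=
  ∑ l ∈ Sset j k, ∏ i : Fin j, b (i.val + 1) (l i)

private lemma Sfun_small (b : ℕ → ℕ → ℤ) {j k : ℕ} (hj : 1 ≤ j) (hk : k ≤ 1) :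
    Sfun b j k = 0 := by
  rw [Sfun]
  apply Finset.sum_eq_zero
  intro l hl
  rw [mem_Sset] at hl
  exfalso
  have h0 : 2 ≤ l ⟨0, hj⟩ := hl.2 _
  have h1 : l ⟨0, hj⟩ ≤ ∑ i, l i :=
    Finset.single_le_sum (fun i _ => Nat.zero_le _) (Finset.mem_univ _)
  omega

private lemma Sfun_one (b : ℕ → ℕ → ℤ) (h0 : b 1 0 = 0) (h1 : b 1 1 = 0) (n : ℕ) :
    Sfun b 1 n = b 1 n := by
  rcases Nat.lt_or_ge n 2 with h | h
  · rw [Sfun_small b le_rfl (by omega)]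
    interval_cases n
    · rw [h0]
    · rw [h1]
  · rw [Sfun]
    have hset : Sset 1 n = {fun _ => n} := by
      ext l
      rw [mem_Sset, Finset.mem_singleton]
      constructor
      · rintro ⟨hs, _⟩
        funext i
        have hi : i = 0 := Subsingleton.elim _ _
        subst hi
        simpa [Fin.sum_univ_one] using hs
      · rintro rfl
        exact ⟨by simp [Fin.sum_univ_one], fun i => h⟩
    rw [hset, Finset.sum_singleton]
    simp [Fin.prod_univ_one]

private lemma Sfun_split (b : ℕ → ℕ → ℤ) {j : ℕ} (hj : 1 ≤ j) (k : ℕ) :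
    Sfun b (j+1) k = ∑ a ∈ Finset.Icc 2 (k-2), b (j+1) a * Sfun b j (k - a) := by
  have hrw : ∀ a ∈ Finset.Icc 2 (k-2), b (j+1) a * Sfun b j (k-a)
      = ∑ l ∈ Sset j (k-a), b (j+1) a * ∏ i : Fin j, b (i.val+1) (l i) := by
    intro a _; rw [Sfun, Finset.mul_sum]
  rw [Finset.sum_congr rfl hrw, Finset.sum_sigma', Sfun]
  apply Finset.sum_nbij' (fun l => (⟨l (Fin.last j), Fin.init l⟩ :
      (a : ℕ) × (Fin j → ℕ))) (fun p => Fin.snoc p.2 p.1)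
  · intro l hl
    rw [mem_Sset] at hl
    obtain ⟨hsum, hge⟩ := hl
    rw [Fin.sum_univ_castSucc] at hsum
    have h2 : 2 ≤ ∑ i : Fin j, l (Fin.castSucc i) := by
      have ha : 2 ≤ l (Fin.castSucc ⟨0, hj⟩) := hge _
      have hb : l (Fin.castSucc ⟨0, hj⟩) ≤ ∑ i : Fin j, l (Fin.castSucc i) :=
        Finset.single_le_sum (f := fun i : Fin j => l (Fin.castSucc i))
          (fun i _ => Nat.zero_le _) (Finset.mem_univ _)
      omega
    have hlast : 2 ≤ l (Fin.last j) := hge _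
    simp only [Finset.mem_sigma, Finset.mem_Icc, mem_Sset]
    refine ⟨⟨hlast, by omega⟩, ?_, fun i => hge _⟩
    simp only [Fin.init]
    omega
  · rintro ⟨a, l⟩ hp
    simp only [Finset.mem_sigma, Finset.mem_Icc, mem_Sset] at hp
    obtain ⟨⟨ha2, hak⟩, hsum, hge⟩ := hp
    rw [mem_Sset, Fin.sum_univ_castSucc]
    simp only [Fin.snoc_castSucc, Fin.snoc_last]
    refine ⟨by omega, ?_⟩
    intro i
    refine Fin.lastCases ?_ ?_ i
    · rw [Fin.snoc_last]; exact ha2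
    · intro i; rw [Fin.snoc_castSucc]; exact hge i
  · intro l _; exact Fin.snoc_init_self l
  · rintro ⟨a, l⟩ _
    simp [Fin.snoc_last, Fin.init_snoc]
  · intro l _
    rw [Fin.prod_univ_castSucc]
    simp only [Fin.init, Fin.coe_castSucc, Fin.val_last]
    ring

private lemma Sfun_conv (b : ℕ → ℕ → ℤ) {j : ℕ} (hj : 1 ≤ j)
    (hbj0 : b (j+1) 0 = 0) (hbj1 : b (j+1) 1 = 0) {k N : ℕ} (hN : k < N) :
    Sfun b (j+1) k = ∑ l ∈ Finset.range N, b (j+1) l * Sfun b j (k - l) := by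
  rw [Sfun_split b hj]
  apply Finset.sum_subset
  · intro a ha
    rw [Finset.mem_Icc] at ha
    rw [Finset.mem_range]
    omega
  · intro a ha ha'
    rw [Finset.mem_range] at ha
    rw [Finset.mem_Icc] at ha'
    rcases Nat.lt_or_ge a 2 with h | h
    · interval_cases a
      · rw [hbj0, zero_mul]
      · rw [hbj1, zero_mul]
    · have hk1 : k - a ≤ 1 := by omega
      rw [Sfun_small b hj hk1, mul_zero]

private lemma telescope (t : ℕ) (x : ℕ → ℤ) :
    ∑ i ∈ Finset.range (t+1), (-1 : ℤ)^i * (Nat.choose t i : ℤ) * (x i - x (i+1))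
      = ∑ i ∈ Finset.range (t+2), (-1 : ℤ)^i * (Nat.choose (t+1) i : ℤ) * x i := by
  have hR : ∑ i ∈ Finset.range (t+2), (-1:ℤ)^i * ((t+1).choose i : ℤ) * x i
      = x 0 + ∑ i ∈ Finset.range (t+1),
          (-1:ℤ)^(i+1) * ((t.choose i : ℤ) + (t.choose (i+1) : ℤ)) * x (i+1) := by
    rw [Finset.sum_range_succ' (fun i => (-1:ℤ)^i * ((t+1).choose i : ℤ) * x i) (t+1)]
    simp only [Nat.choose_succ_succ t, Nat.cast_add, pow_zero, Nat.choose_zero_right,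
      Nat.cast_one, mul_one, one_mul]
    exact add_comm _ _
  have h1 : ∑ i ∈ Finset.range (t+1), (-1:ℤ)^i * (t.choose i : ℤ) * x i
      = x 0 + ∑ i ∈ Finset.range (t+1), (-1:ℤ)^(i+1) * (t.choose (i+1) : ℤ) * x (i+1) := by
    rw [Finset.sum_range_succ' (fun i => (-1:ℤ)^i * (t.choose i : ℤ) * x i) t,
        Finset.sum_range_succ (fun i => (-1:ℤ)^(i+1) * (t.choose (i+1) : ℤ) * x (i+1)) t]
    simp only [Nat.choose_succ_self, Nat.cast_zero, mul_zero, zero_mul, add_zero,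
      pow_zero, Nat.choose_zero_right, Nat.cast_one, mul_one, one_mul]
    exact add_comm _ _
  have hsplit : ∑ i ∈ Finset.range (t+1), (-1:ℤ)^i * (t.choose i : ℤ) * (x i - x (i+1))
      = (∑ i ∈ Finset.range (t+1), (-1:ℤ)^i * (t.choose i : ℤ) * x i)
        - ∑ i ∈ Finset.range (t+1), (-1:ℤ)^i * (t.choose i : ℤ) * x (i+1) := by
    rw [← Finset.sum_sub_distrib]
    apply Finset.sum_congr rfl
    intro i _; ring
  have h2 : ∑ i ∈ Finset.range (t+1),
        (-1:ℤ)^(i+1) * ((t.choose i : ℤ) + (t.choose (i+1) : ℤ)) * x (i+1)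
      = (∑ i ∈ Finset.range (t+1), (-1:ℤ)^(i+1) * (t.choose (i+1) : ℤ) * x (i+1))
        - ∑ i ∈ Finset.range (t+1), (-1:ℤ)^i * (t.choose i : ℤ) * x (i+1) := by
    rw [← Finset.sum_sub_distrib]
    apply Finset.sum_congr rfl
    intro i _; ring
  rw [hsplit, hR, h1, h2]
  ring

/-- Closed form for the recursion computing the `m`-th Betti numbers of configuration
spaces of trees with `m` essential vertices: if `b j` (for `1 ≤ j ≤ m`) vanish at `0` and `1`,
and `B` satisfies `B 1 = b 1` and
`B j n = ∑_{l=2}^{n-2} (b j l - b j (l-1)) * B (j-1) (n-l)` for `2 ≤ j ≤ m`, then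
`B m n = ∑_{i=0}^{m-1} (-1)^i C(m-1,i) ∑_{l₁+⋯+l_m = n-i, l_j ≥ 2} ∏_j b j (l_j)`. -/
theorem tree_betti_closed_form (m : ℕ) (hm : 1 ≤ m) (b : ℕ → ℕ → ℤ)
    (hb0 : ∀ j, 1 ≤ j → j ≤ m → b j 0 = 0)
    (hb1 : ∀ j, 1 ≤ j → j ≤ m → b j 1 = 0)
    (B : ℕ → ℕ → ℤ)
    (hB1 : ∀ n, B 1 n = b 1 n)
    (hBrec : ∀ j, 2 ≤ j → j ≤ m → ∀ n,
      B j n = ∑ l ∈ Finset.Icc 2 (n - 2), (b j l - b j (l - 1)) * B (j - 1) (n - l)) :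
    ∀ n, B m n =
      ∑ i ∈ Finset.range m, (-1 : ℤ) ^ i * (Nat.choose (m - 1) i : ℤ) *
        ∑ l ∈ (Finset.Nat.antidiagonalTuple m (n - i)).filter (fun l => ∀ j, 2 ≤ l j),
          ∏ j : Fin m, b (j.val + 1) (l j) := by
  have key : ∀ j, 1 ≤ j → j ≤ m → ∀ k, B j k
      = ∑ i ∈ Finset.range j, (-1:ℤ)^i * (Nat.choose (j-1) i : ℤ) * Sfun b j (k - i) := by
    intro j hj
    induction j, hj using Nat.le_induction with
    | base =>
      intro _ k
      rw [hB1 k, Finset.sum_range_one]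
      simp only [pow_zero, Nat.sub_self, Nat.choose_self, Nat.cast_one, one_mul, Nat.sub_zero]
      exact (Sfun_one b (hb0 1 le_rfl hm) (hb1 1 le_rfl hm) k).symm
    | succ j hj ih =>
      intro hjm n
      have hj1m : j ≤ m := by omega
      have hbj0 : b (j+1) 0 = 0 := hb0 (j+1) (by omega) hjm
      have hbj1 : b (j+1) 1 = 0 := hb1 (j+1) (by omega) hjm
      rw [hBrec (j+1) (by omega) hjm n]
      simp only [Nat.add_sub_cancel]
      calc ∑ l ∈ Finset.Icc 2 (n-2), (b (j+1) l - b (j+1) (l-1)) * B j (n-l)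
          = ∑ l ∈ Finset.Icc 2 (n-2), ∑ i ∈ Finset.range j,
              (-1:ℤ)^i * ((j-1).choose i : ℤ)
                * ((b (j+1) l - b (j+1) (l-1)) * Sfun b j (n - i - l)) := by
            apply Finset.sum_congr rfl; intro l hl
            rw [ih hj1m (n - l), Finset.mul_sum]
            apply Finset.sum_congr rfl; intro i _
            rw [show n - l - i = n - i - l by omega]
            ring
        _ = ∑ i ∈ Finset.range j, (-1:ℤ)^i * ((j-1).choose i : ℤ)
              * ∑ l ∈ Finset.Icc 2 (n-2),
                  (b (j+1) l - b (j+1) (l-1)) * Sfun b j (n - i - l) := by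
            rw [Finset.sum_comm]
            apply Finset.sum_congr rfl; intro i _
            rw [Finset.mul_sum]
        _ = ∑ i ∈ Finset.range j, (-1:ℤ)^i * ((j-1).choose i : ℤ)
              * (Sfun b (j+1) (n - i) - Sfun b (j+1) (n - (i+1))) := by
            apply Finset.sum_congr rfl; intro i _
            congr 1
            have e1 : ∑ l ∈ Finset.Icc 2 (n-2), b (j+1) l * Sfun b j (n - i - l)
                = Sfun b (j+1) (n - i) := by
              rw [Sfun_conv b hj hbj0 hbj1 (show n - i < n + 1 by omega)]
              apply Finset.sum_subset
              · intro l hl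
                rw [Finset.mem_Icc] at hl
                rw [Finset.mem_range]; omega
              · intro l hl hl'
                rw [Finset.mem_range] at hl
                rw [Finset.mem_Icc] at hl'
                rcases Nat.lt_or_ge l 2 with h | h
                · interval_cases l
                  · rw [hbj0, zero_mul]
                  · rw [hbj1, zero_mul]
                · have hle : n - i - l ≤ 1 := by omega
                  rw [Sfun_small b hj hle, mul_zero]
            have e2 : ∑ l ∈ Finset.Icc 2 (n-2), b (j+1) (l-1) * Sfun b j (n - i - l)
                = Sfun b (j+1) (n - (i+1)) := by
              have step1 : ∑ l ∈ Finset.Icc 2 (n-2), b (j+1) (l-1) * Sfun b j (n-i-l)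
                  = ∑ l ∈ Finset.range (n+1), b (j+1) (l-1) * Sfun b j (n-i-l) := by
                apply Finset.sum_subset
                · intro l hl
                  rw [Finset.mem_Icc] at hl
                  rw [Finset.mem_range]; omega
                · intro l hl hl'
                  rw [Finset.mem_range] at hl
                  rw [Finset.mem_Icc] at hl'
                  rcases Nat.lt_or_ge l 2 with h | h
                  · interval_cases l
                    · show b (j+1) (0-1) * _ = 0
                      rw [show (0:ℕ) - 1 = 0 by rfl, hbj0, zero_mul]
                    · rw [show (1:ℕ) - 1 = 0 by rfl, hbj0, zero_mul]
                  · have hle : n - i - l ≤ 1 := by omega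
                    rw [Sfun_small b hj hle, mul_zero]
              rw [step1,
                Finset.sum_range_succ' (fun l => b (j+1) (l-1) * Sfun b j (n-i-l)) n]
              simp only [Nat.add_sub_cancel]
              rw [show (0:ℕ) - 1 = 0 by rfl, hbj0, zero_mul, add_zero]
              have hcg : ∀ l ∈ Finset.range n,
                  b (j+1) l * Sfun b j (n-i-(l+1)) = b (j+1) l * Sfun b j (n-(i+1)-l) := by
                intro l _
                rw [show n-i-(l+1) = n-(i+1)-l by omega]
              rw [Finset.sum_congr rfl hcg,
                Sfun_conv b hj hbj0 hbj1 (show n-(i+1) < n + 1 by omega),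
                Finset.sum_range_succ]
              rw [Sfun_small b hj (show n-(i+1)-n ≤ 1 by omega), mul_zero, add_zero]
            rw [← e1, ← e2, ← Finset.sum_sub_distrib]
            apply Finset.sum_congr rfl; intro l _
            ring
        _ = ∑ i ∈ Finset.range (j+1), (-1:ℤ)^i * (Nat.choose (j+1-1) i : ℤ)
              * Sfun b (j+1) (n - i) := by
            obtain ⟨t, rfl⟩ : ∃ t, j = t + 1 := ⟨j-1, by omega⟩
            simp only [Nat.add_sub_cancel]
            exact telescope t (fun i => Sfun b (t+1+1) (n - i))
  intro n
  rw [key m hm le_rfl n]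
  rfl
end

section
/- Let m ≥ 1 and let b₁, …, b_m : ℕ → ℤ be sequences with b_j(0) = b_j(1) = 0 for every j. Define B₁, …, B_m : ℕ → ℤ by B₁(n) = b₁(n) and B_j(n) = Σ_{l=2}^{n−2} ( b_j(l) − b_j(l−1) ) · B_{j−1}(n−l) for 2 ≤ j ≤ m. Then B_m(2m) = b₁(2) · b₂(2) ⋯ b_m(2). -/
/-- For a tree with exactly `m` essential vertices and `n = 2m` particles, the top Betti
number is the product of the two-particle first Betti numbers of the star subgraphs:
with `b j` vanishing at `0` and `1` and `B` defined by the paper's recursion,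
`B m (2m) = b 1 2 * b 2 2 * ⋯ * b m 2`. -/
theorem tree_betti_top_product (m : ℕ) (hm : 1 ≤ m) (b : ℕ → ℕ → ℤ)
    (hb0 : ∀ j, 1 ≤ j → j ≤ m → b j 0 = 0)
    (hb1 : ∀ j, 1 ≤ j → j ≤ m → b j 1 = 0)
    (B : ℕ → ℕ → ℤ)
    (hB1 : ∀ n, B 1 n = b 1 n)
    (hBrec : ∀ j, 2 ≤ j → j ≤ m → ∀ n,
      B j n = ∑ l ∈ Finset.Icc 2 (n - 2), (b j l - b j (l - 1)) * B (j - 1) (n - l)) :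
    B m (2 * m) = ∏ j ∈ Finset.Icc 1 m, b j 2 := by
  suffices h : ∀ j, 1 ≤ j → j ≤ m →
      (∀ n, n < 2 * j → B j n = 0) ∧ B j (2 * j) = ∏ i ∈ Finset.Icc 1 j, b i 2 by
    exact (h m hm le_rfl).2
  intro j hj
  induction j, hj using Nat.le_induction with
  | base =>
    intro hjm
    constructor
    · intro n hn
      rw [hB1]
      interval_cases n
      · exact hb0 1 le_rfl hjm
      · exact hb1 1 le_rfl hjm
    · rw [hB1]
      simp
  | succ j hj ih =>
    intro hjm
    have hjm' : j ≤ m := by omega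
    obtain ⟨ihz, ihp⟩ := ih hjm'
    have hrec := hBrec (j + 1) (by omega) hjm
    constructor
    · intro n hn
      rw [hrec]
      apply Finset.sum_eq_zero
      intro l hl
      rw [Finset.mem_Icc] at hl
      have : B (j + 1 - 1) (n - l) = 0 := by
        simp only [Nat.add_sub_cancel]
        exact ihz _ (by omega)
      rw [this, mul_zero]
    · rw [hrec (2 * (j + 1))]
      have h2 : (2 : ℕ) ∈ Finset.Icc 2 (2 * (j + 1) - 2) := by
        rw [Finset.mem_Icc]; omega
      rw [Finset.sum_eq_single_of_mem 2 h2]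
      · simp only [Nat.add_sub_cancel]
        have : 2 * (j + 1) - 2 = 2 * j := by omega
        rw [this, ihp, hb1 (j + 1) (by omega) hjm,
          Finset.prod_Icc_succ_top (by omega : 1 ≤ j + 1)]
        ring
      · intro l hl hl2
        rw [Finset.mem_Icc] at hl
        have : B (j + 1 - 1) (2 * (j + 1) - l) = 0 := by
          simp only [Nat.add_sub_cancel]
          exact ihz _ (by omega)
        rw [this, mul_zero]
end

section
/- Let X and Y be topological spaces and n a natural number. The ordered configuration space F_n(X ⊔ Y) = { f : Fin n → X ⊕ Y | f injective }, topologized as a subspace of the product (Fin n → X ⊕ Y), is homeomorphic to the disjoint union (sigma type) Σ_{s : Finset (Fin n)} ( { g : s → X | g injective } × { h : sᶜ → Y | h injective } ), where each summand carries the product of the subspace topologies and the sigma type carries the disjoint-union topology. In particular, for a disjoint union of two spaces, the n-particle ordered configuration space decomposes into connected-by-construction pieces indexed by which particles sit in X and which sit in Y. -/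
section OrderedConfigAux

variable {X Y : Type*} [TopologicalSpace X] [TopologicalSpace Y] {n : ℕ}

/-- Packing: from a subset `s` and injections `s → X`, `sᶜ → Y`, build an injection
`Fin n → X ⊕ Y`. -/
def ocPack (s : Finset (Fin n))
    (p : {g : {x // x ∈ s} → X // Function.Injective g} ×
         {h : {x // x ∈ sᶜ} → Y // Function.Injective h}) :
    {f : Fin n → X ⊕ Y // Function.Injective f} :=
  ⟨fun i => if hi : i ∈ s then Sum.inl (p.1.1 ⟨i, hi⟩)
      else Sum.inr (p.2.1 ⟨i, Finset.mem_compl.2 hi⟩), by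
    intro a b hab
    by_cases ha : a ∈ s <;> by_cases hb : b ∈ s <;>
      simp only [dif_pos, dif_neg, ha, hb] at hab
    · exact congrArg Subtype.val (p.1.2 (Sum.inl_injective hab))
    · exact absurd hab (by simp)
    · exact absurd hab (by simp)
    · exact congrArg Subtype.val (p.2.2 (Sum.inr_injective hab))⟩

lemma ocPack_isLeft (s : Finset (Fin n))
    (p : {g : {x // x ∈ s} → X // Function.Injective g} ×
         {h : {x // x ∈ sᶜ} → Y // Function.Injective h}) (i : Fin n) :
    i ∈ s ↔ ((ocPack s p).1 i).isLeft := by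
  by_cases hi : i ∈ s <;> simp [ocPack, hi]

/-- Decomposition: from an injection `f : Fin n → X ⊕ Y` whose left labels are exactly `s`,
extract the injections `s → X` and `sᶜ → Y`. -/
def ocDecompose (s : Finset (Fin n)) (f : Fin n → X ⊕ Y) (hf : Function.Injective f)
    (hs : ∀ i, i ∈ s ↔ (f i).isLeft) :
    {g : {x // x ∈ s} → X // Function.Injective g} ×
      {h : {x // x ∈ sᶜ} → Y // Function.Injective h} :=
  (⟨fun i => (f i.1).getLeft ((hs i.1).1 i.2), by
      intro a b hab
      refine Subtype.ext (hf ?_)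
      rw [← Sum.inl_getLeft (f a.1) ((hs a.1).1 a.2),
        ← Sum.inl_getLeft (f b.1) ((hs b.1).1 b.2)]
      exact congrArg Sum.inl hab⟩,
   ⟨fun i => (f i.1).getRight
        (Sum.not_isLeft.1 fun h => Finset.mem_compl.1 i.2 ((hs i.1).2 h)), by
      intro a b hab
      refine Subtype.ext (hf ?_)
      rw [← Sum.inr_getRight (f a.1)
          (Sum.not_isLeft.1 fun h => Finset.mem_compl.1 a.2 ((hs a.1).2 h)),
        ← Sum.inr_getRight (f b.1)
          (Sum.not_isLeft.1 fun h => Finset.mem_compl.1 b.2 ((hs b.1).2 h))]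
      exact congrArg Sum.inr hab⟩)

lemma ocPack_ocDecompose (s : Finset (Fin n)) (f : Fin n → X ⊕ Y)
    (hf : Function.Injective f) (hs : ∀ i, i ∈ s ↔ (f i).isLeft) :
    ocPack s (ocDecompose s f hf hs) = ⟨f, hf⟩ := by
  refine Subtype.ext (funext fun i => ?_)
  by_cases hi : i ∈ s
  · simp only [ocPack, dif_pos hi, ocDecompose]
    exact Sum.inl_getLeft _ _
  · simp only [ocPack, dif_neg hi, ocDecompose]
    exact Sum.inr_getRight _ _

lemma ocPack_bijective :
    Function.Bijective (fun q : (Σ s : Finset (Fin n),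
        {g : {x // x ∈ s} → X // Function.Injective g} ×
          {h : {x // x ∈ sᶜ} → Y // Function.Injective h}) =>
      ocPack q.1 q.2) := by
  constructor
  · rintro ⟨s, p⟩ ⟨t, q⟩ h
    have hval : (ocPack s p).1 = (ocPack t q).1 := congrArg Subtype.val h
    have hst : s = t := by
      ext i
      rw [ocPack_isLeft s p i, ocPack_isLeft t q i, hval]
    subst hst
    refine congrArg (Sigma.mk s) ?_
    refine Prod.ext (Subtype.ext (funext fun i => ?_)) (Subtype.ext (funext fun i => ?_))
    · have := congrFun hval i.1
      simp only [ocPack, dif_pos i.2] at this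
      exact Sum.inl_injective this
    · have hi : i.1 ∉ s := Finset.mem_compl.1 i.2
      have := congrFun hval i.1
      simp only [ocPack, dif_neg hi] at this
      exact Sum.inr_injective this
  · rintro ⟨f, hf⟩
    classical
    set s := Finset.univ.filter (fun i => (f i).isLeft) with hsdef
    have hmem : ∀ i, i ∈ s ↔ (f i).isLeft := fun i => by simp [hsdef]
    exact ⟨⟨s, ocDecompose s f hf hmem⟩, ocPack_ocDecompose s f hf hmem⟩

lemma ocPack_continuous (s : Finset (Fin n)) :
    Continuous (fun p : ({g : {x // x ∈ s} → X // Function.Injective g} ×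
        {h : {x // x ∈ sᶜ} → Y // Function.Injective h}) => ocPack s p) := by
  refine Continuous.subtype_mk (continuous_pi fun i => ?_) _
  by_cases hi : i ∈ s
  · simp only [ocPack, dif_pos hi]
    exact continuous_inl.comp
      ((continuous_apply _).comp (continuous_subtype_val.comp continuous_fst))
  · simp only [ocPack, dif_neg hi]
    exact continuous_inr.comp
      ((continuous_apply _).comp (continuous_subtype_val.comp continuous_snd))

lemma ocIsOpen (s : Finset (Fin n)) :
    IsOpen {f : Fin n → X ⊕ Y | ∀ i, i ∈ s ↔ (f i).isLeft} := by
  have heq : {f : Fin n → X ⊕ Y | ∀ i, i ∈ s ↔ (f i).isLeft}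
      = ⋂ i, (fun f : Fin n → X ⊕ Y => f i) ⁻¹'
          (if i ∈ s then Set.range Sum.inl else Set.range Sum.inr) := by
    ext f
    simp only [Set.mem_iInter, Set.mem_setOf_eq, Set.mem_preimage]
    refine forall_congr' fun i => ?_
    by_cases hi : i ∈ s <;> cases h : f i <;> simp [hi, h]
  rw [heq]
  refine isOpen_iInter_of_finite fun i => ?_
  refine (continuous_apply i).isOpen_preimage _ ?_
  by_cases hi : i ∈ s
  · simpa [hi] using (isOpen_range_inl (X := X) (Y := Y))
  · simpa [hi] using (isOpen_range_inr (X := X) (Y := Y))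

lemma continuous_ocGetLeft :
    Continuous (fun z : {z : X ⊕ Y // z.isLeft} => z.1.getLeft z.2) := by
  rw [Topology.IsEmbedding.inl (Y := Y).continuous_iff]
  have : (Sum.inl ∘ fun z : {z : X ⊕ Y // z.isLeft} => z.1.getLeft z.2) = Subtype.val := by
    funext z
    exact Sum.inl_getLeft _ _
  rw [this]
  exact continuous_subtype_val

lemma continuous_ocGetRight :
    Continuous (fun z : {z : X ⊕ Y // z.isRight} => z.1.getRight z.2) := by
  rw [Topology.IsEmbedding.inr (X := X).continuous_iff]
  have : (Sum.inr ∘ fun z : {z : X ⊕ Y // z.isRight} => z.1.getRight z.2) = Subtype.val := by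
    funext z
    exact Sum.inr_getRight _ _
  rw [this]
  exact continuous_subtype_val

end OrderedConfigAux

/-- The ordered `n`-particle configuration space of a disjoint union `X ⊕ Y` decomposes,
up to homeomorphism, as the disjoint union over subsets `s ⊆ Fin n` (the labels of the
particles sitting in `X`) of products of spaces of injections `s → X` and `sᶜ → Y`. -/
theorem orderedConfig_disjoint_union (X Y : Type*) [TopologicalSpace X] [TopologicalSpace Y]
    (n : ℕ) :
    Nonempty ({f : Fin n → X ⊕ Y // Function.Injective f} ≃ₜ
      Σ s : Finset (Fin n),
        {g : {x // x ∈ s} → X // Function.Injective g} ×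
          {h : {x // x ∈ sᶜ} → Y // Function.Injective h}) := by
  classical
  set Ψ := fun q : (Σ s : Finset (Fin n),
      {g : {x // x ∈ s} → X // Function.Injective g} ×
        {h : {x // x ∈ sᶜ} → Y // Function.Injective h}) => ocPack q.1 q.2 with hΨ
  have hbij : Function.Bijective Ψ := ocPack_bijective
  let e := Equiv.ofBijective Ψ hbij
  have hcontΨ : Continuous Ψ := by
    refine continuous_sigma fun s => ?_
    exact ocPack_continuous s
  -- continuity of the inverse
  have hcont_symm : Continuous e.symm := by
    rw [continuous_iff_continuousAt]
    intro f₀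
    set s₀ : Finset (Fin n) := Finset.univ.filter (fun i => (f₀.1 i).isLeft) with hs₀def
    set W : Set {f : Fin n → X ⊕ Y // Function.Injective f} :=
      Subtype.val ⁻¹' {f : Fin n → X ⊕ Y | ∀ i, i ∈ s₀ ↔ (f i).isLeft} with hWdef
    have hWopen : IsOpen W := (ocIsOpen s₀).preimage continuous_subtype_val
    have hf₀W : f₀ ∈ W := by
      intro i
      simp [hs₀def]
    refine ContinuousOn.continuousAt ?_ (hWopen.mem_nhds hf₀W)
    rw [continuousOn_iff_continuous_restrict]
    have hrestr : W.domRestrict e.symm = fun x : W =>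
        (⟨s₀, ocDecompose s₀ x.1.1 x.1.2 x.2⟩ : Σ s : Finset (Fin n),
          {g : {x // x ∈ s} → X // Function.Injective g} ×
            {h : {x // x ∈ sᶜ} → Y // Function.Injective h}) := by
      funext x
      rw [Set.restrict_apply, Equiv.symm_apply_eq]
      exact (ocPack_ocDecompose s₀ x.1.1 x.1.2 x.2).symm
    rw [hrestr]
    refine continuous_sigmaMk.comp ?_
    unfold ocDecompose
    refine Continuous.prodMk ?_ ?_
    · refine Continuous.subtype_mk ?_ _
      refine continuous_pi fun i => ?_
      have hcoord : Continuous fun x : ↥W =>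
          (⟨x.1.1 i.1, (x.2 i.1).1 i.2⟩ : {z : X ⊕ Y // z.isLeft}) :=
        Continuous.subtype_mk ((continuous_apply (i.1 : Fin n)).comp
          (continuous_subtype_val.comp continuous_subtype_val)) _
      exact continuous_ocGetLeft.comp hcoord
    · refine Continuous.subtype_mk ?_ _
      refine continuous_pi fun i => ?_
      have hcoord : Continuous fun x : ↥W =>
          (⟨x.1.1 i.1, Sum.not_isLeft.1 fun h =>
            Finset.mem_compl.1 i.2 ((x.2 i.1).2 h)⟩ : {z : X ⊕ Y // z.isRight}) :=
        Continuous.subtype_mk ((continuous_apply (i.1 : Fin n)).comp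
          (continuous_subtype_val.comp continuous_subtype_val)) _
      exact continuous_ocGetRight.comp hcoord
  exact ⟨(Homeomorph.mk e hcontΨ hcont_symm).symm⟩
end

section
/- Let X and Y be topological spaces and n a natural number. For a topological space Z and k ∈ ℕ let C_k(Z) denote the unordered configuration space: the quotient of F_k(Z) = { f : Fin k → Z | f injective } (subspace of the product topology) by the action of the symmetric group Equiv.Perm (Fin k) acting by precomposition, with the quotient topology. Then C_n(X ⊔ Y) is homeomorphic to the disjoint union Σ_{k=0}^{n} ( C_k(X) × C_{n−k}(Y) ), where each summand carries the product topology and the sigma type carries the disjoint-union topology. -/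
/-- The setoid on the ordered configuration space `{f : Fin k → Z // Injective f}`
identifying configurations differing by a permutation of the labels. -/
def configSetoid (Z : Type*) (k : ℕ) : Setoid {f : Fin k → Z // Function.Injective f} where
  r f g := ∃ σ : Equiv.Perm (Fin k), f.1 ∘ σ = g.1
  iseqv :=
    { refl := fun f => ⟨Equiv.refl _, by ext x; simp⟩
      symm := fun {f g} => fun ⟨σ, hσ⟩ => ⟨σ.symm, by ext x; simp [← hσ]⟩
      trans := fun {f g h} => fun ⟨σ, hσ⟩ ⟨τ, hτ⟩ =>
        ⟨τ.trans σ, by ext x; simp [← hτ, ← hσ]⟩ }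

/-- The unordered configuration space `C_k(Z)`: the quotient of the space of injections
`Fin k → Z` by the permutation action on labels. -/
def UnorderedConfig (Z : Type*) (k : ℕ) := Quotient (configSetoid Z k)

/-- `C_k(Z)` carries the quotient topology induced from the subspace topology on the
space of injections `Fin k → Z` (itself a subspace of the product `Fin k → Z`). -/
instance (Z : Type*) [TopologicalSpace Z] (k : ℕ) : TopologicalSpace (UnorderedConfig Z k) :=
  TopologicalSpace.coinduced (Quotient.mk (configSetoid Z k)) inferInstance

namespace ConfigAux

set_option linter.unusedSectionVars false

abbrev Conf (Z : Type*) (k : ℕ) := {f : Fin k → Z // Function.Injective f}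

section Quot

variable {Z : Type*} [TopologicalSpace Z] {k : ℕ}

def q (Z : Type*) [TopologicalSpace Z] (k : ℕ) : Conf Z k → UnorderedConfig Z k :=
  Quotient.mk (configSetoid Z k)

lemma continuous_q : Continuous (q Z k) := continuous_coinduced_rng

lemma surjective_q : Function.Surjective (q Z k) := Quotient.mk_surjective

/-- Precomposition with a permutation as a homeomorphism of the ordered config space. -/
def precomp (σ : Equiv.Perm (Fin k)) : Conf Z k ≃ₜ Conf Z k where
  toFun f := ⟨f.1 ∘ σ, f.2.comp σ.injective⟩
  invFun f := ⟨f.1 ∘ σ.symm, f.2.comp σ.symm.injective⟩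
  left_inv f := by ext i; simp
  right_inv f := by ext i; simp
  continuous_toFun := by
    refine Continuous.subtype_mk (continuous_pi fun i => ?_) _
    exact (continuous_apply (σ i)).comp continuous_subtype_val
  continuous_invFun := by
    refine Continuous.subtype_mk (continuous_pi fun i => ?_) _
    exact (continuous_apply (σ.symm i)).comp continuous_subtype_val

lemma isOpenMap_q : IsOpenMap (q Z k) := by
  intro U hU
  have : IsOpen (q Z k ⁻¹' (q Z k '' U)) := by
    have heq : q Z k ⁻¹' (q Z k '' U) = ⋃ σ : Equiv.Perm (Fin k), (precomp σ) '' U := by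
      ext f
      simp only [Set.mem_preimage, Set.mem_image, Set.mem_iUnion]
      constructor
      · rintro ⟨u, hu, huf⟩
        obtain ⟨σ, hσ⟩ := Quotient.exact huf
        exact ⟨σ, u, hu, Subtype.ext hσ⟩
      · rintro ⟨σ, u, hu, huf⟩
        refine ⟨u, hu, Quotient.sound ⟨σ, ?_⟩⟩
        rw [← huf]; rfl
    rw [heq]
    exact isOpen_iUnion fun σ => (precomp σ).isOpenMap U hU
  exact this

lemma isOpenQuotientMap_q : IsOpenQuotientMap (q Z k) :=
  ⟨surjective_q, continuous_q, isOpenMap_q⟩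

end Quot

section Combine

variable {X Y : Type*} [TopologicalSpace X] [TopologicalSpace Y] {n k m : ℕ}

/-- The identification `Fin k ⊕ Fin m ≃ Fin n` when `k + m = n`. -/
def e (h : k + m = n) : Fin k ⊕ Fin m ≃ Fin n :=
  finSumFinEquiv.trans (finCongr h)

/-- Ambient combine map. -/
def amb (h : k + m = n) (p : (Fin k → X) × (Fin m → Y)) : Fin n → X ⊕ Y :=
  Sum.elim (Sum.inl ∘ p.1) (Sum.inr ∘ p.2) ∘ (e h).symm

lemma continuous_amb (h : k + m = n) : Continuous (amb (X := X) (Y := Y) h) := by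
  refine continuous_pi fun i => ?_
  rcases hc : (e h).symm i with j | j <;>
    simp only [amb, Function.comp_apply, hc, Sum.elim_inl, Sum.elim_inr]
  · exact continuous_inl.comp ((continuous_apply j).comp continuous_fst)
  · exact continuous_inr.comp ((continuous_apply j).comp continuous_snd)

lemma isOpenMap_amb (h : k + m = n) : IsOpenMap (amb (X := X) (Y := Y) h) := by
  have h1 : IsOpenMap (fun g : Fin k → X => (Sum.inl : X → X ⊕ Y) ∘ g) :=
    IsOpenMap.piMap (f := fun _ : Fin k => (Sum.inl : X → X ⊕ Y))
      (fun _ => Topology.IsOpenEmbedding.inl.isOpenMap) (by simp [Filter.cofinite_eq_bot])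
  have h2 : IsOpenMap (fun g : Fin m → Y => (Sum.inr : Y → X ⊕ Y) ∘ g) :=
    IsOpenMap.piMap (f := fun _ : Fin m => (Sum.inr : Y → X ⊕ Y))
      (fun _ => Topology.IsOpenEmbedding.inr.isOpenMap) (by simp [Filter.cofinite_eq_bot])
  have h3 : IsOpenMap (fun p : (Fin k → X ⊕ Y) × (Fin m → X ⊕ Y) => Sum.elim p.1 p.2) :=
    (Homeomorph.sumArrowHomeomorphProdArrow (ι := Fin k) (ι' := Fin m) (X := X ⊕ Y)).symm.isOpenMap
  have h4 : IsOpenMap (fun F : Fin k ⊕ Fin m → X ⊕ Y => F ∘ (e h).symm) := by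
    have hm := (Homeomorph.piCongrLeft (Y := fun _ : Fin k ⊕ Fin m => X ⊕ Y)
      (e h).symm).symm.isOpenMap
    have heq : ⇑(Homeomorph.piCongrLeft (Y := fun _ : Fin k ⊕ Fin m => X ⊕ Y) (e h).symm).symm =
        fun F : Fin k ⊕ Fin m → X ⊕ Y => F ∘ (e h).symm := by
      ext F x
      simp [Homeomorph.piCongrLeft, Equiv.piCongrLeft, Equiv.piCongrLeft']
    rwa [heq] at hm
  have : amb (X := X) (Y := Y) h =
      (fun F : Fin k ⊕ Fin m → X ⊕ Y => F ∘ (e h).symm) ∘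
      (fun p : (Fin k → X ⊕ Y) × (Fin m → X ⊕ Y) => Sum.elim p.1 p.2) ∘
      (Prod.map (fun g => Sum.inl ∘ g) (fun g => Sum.inr ∘ g)) := rfl
  rw [this]
  exact h4.comp (h3.comp (h1.prodMap h2))

lemma amb_injective (h : k + m = n) {g : Fin k → X} {f : Fin m → Y}
    (hg : Function.Injective g) (hf : Function.Injective f) :
    Function.Injective (amb h (g, f)) :=
  ((Function.Injective.sumElim (Sum.inl_injective.comp hg) (Sum.inr_injective.comp hf)
    (fun _ _ => by simp)).comp (e h).symm.injective)

/-- Combine two ordered configurations into one on the disjoint union. -/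
def combine (h : k + m = n) (g : Conf X k) (f : Conf Y m) : Conf (X ⊕ Y) n :=
  ⟨amb h (g.1, f.1), amb_injective h g.2 f.2⟩

lemma continuous_combine (h : k + m = n) :
    Continuous (fun p : Conf X k × Conf Y m => combine h p.1 p.2) :=
  Continuous.subtype_mk ((continuous_amb h).comp
    ((continuous_subtype_val.comp continuous_fst).prodMk
      (continuous_subtype_val.comp continuous_snd))) _

lemma isOpenMap_combine (h : k + m = n) :
    IsOpenMap (fun p : Conf X k × Conf Y m => combine h p.1 p.2) := by
  intro U hU
  have hind : Topology.IsInducing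
      (Prod.map (Subtype.val : Conf X k → _) (Subtype.val : Conf Y m → _)) :=
    Topology.IsInducing.prodMap ⟨rfl⟩ ⟨rfl⟩
  obtain ⟨W, hW, hWU⟩ := hind.isOpen_iff.mp hU
  have key : (fun p : Conf X k × Conf Y m => combine h p.1 p.2) '' U =
      Subtype.val ⁻¹' (amb (X := X) (Y := Y) h '' W) := by
    ext f
    constructor
    · rintro ⟨p, hp, rfl⟩
      rw [← hWU] at hp
      exact ⟨(p.1.1, p.2.1), hp, rfl⟩
    · rintro ⟨w, hw, hwf⟩
      have hinj : Function.Injective (amb h w) := by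
        rw [hwf]; exact f.2
      have hg : Function.Injective w.1 := by
        intro a b hab
        have h1 : amb h w ((e h) (Sum.inl a)) = amb h w ((e h) (Sum.inl b)) := by
          simp [amb, hab]
        simpa using (e h).injective (hinj h1)
      have hf2 : Function.Injective w.2 := by
        intro a b hab
        have h1 : amb h w ((e h) (Sum.inr a)) = amb h w ((e h) (Sum.inr b)) := by
          simp [amb, hab]
        simpa using (e h).injective (hinj h1)
      refine ⟨(⟨w.1, hg⟩, ⟨w.2, hf2⟩), ?_, ?_⟩
      · rw [← hWU]; exact hw
      · exact Subtype.ext hwf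
  rw [key]
  exact (isOpenMap_amb h W hW).preimage continuous_subtype_val

@[simp] lemma combine_apply (h : k + m = n) (g : Conf X k) (f : Conf Y m) (i : Fin n) :
    (combine h g f).1 i = Sum.elim (Sum.inl ∘ g.1) (Sum.inr ∘ f.1) ((e h).symm i) := rfl

end Combine

section Count

variable {X Y : Type*} [TopologicalSpace X] [TopologicalSpace Y] {n k m : ℕ}

/-- The number of particles sitting in the left part. -/
def cnt (f : Conf (X ⊕ Y) n) : ℕ := Fintype.card {i : Fin n // (f.1 i).isLeft = true}

lemma cnt_precomp (f : Conf (X ⊕ Y) n) (σ : Equiv.Perm (Fin n))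
    (hinj : Function.Injective (f.1 ∘ σ)) :
    cnt (⟨f.1 ∘ σ, hinj⟩ : Conf (X ⊕ Y) n) = cnt f :=
  Fintype.card_congr (Equiv.subtypeEquiv σ (fun i => Iff.rfl))

/-- `{w : α ⊕ β // w.isLeft} ≃ α`. -/
def isLeftEquiv (α β : Type*) : {w : α ⊕ β // w.isLeft = true} ≃ α where
  toFun w := w.1.getLeft w.2
  invFun a := ⟨Sum.inl a, rfl⟩
  left_inv := by
    rintro ⟨w, hw⟩
    cases w with
    | inl a => rfl
    | inr b => simp at hw
  right_inv a := rfl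

def isRightEquiv (α β : Type*) : {w : α ⊕ β // w.isRight = true} ≃ β where
  toFun w := w.1.getRight w.2
  invFun b := ⟨Sum.inr b, rfl⟩
  left_inv := by
    rintro ⟨w, hw⟩
    cases w with
    | inl a => simp at hw
    | inr b => rfl
  right_inv a := rfl

lemma cnt_combine (h : k + m = n) (g : Conf X k) (f : Conf Y m) :
    cnt (combine h g f) = k := by
  have e1 : {w : Fin k ⊕ Fin m // w.isLeft = true} ≃
      {i : Fin n // ((combine h g f).1 i).isLeft = true} := by
    refine Equiv.subtypeEquiv (e h) (fun w => ?_)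
    rcases w with j | j <;> simp
  calc cnt (combine h g f) = Fintype.card {w : Fin k ⊕ Fin m // w.isLeft = true} :=
        (Fintype.card_congr e1).symm
    _ = Fintype.card (Fin k) := Fintype.card_congr (isLeftEquiv (Fin k) (Fin m))
    _ = k := Fintype.card_fin k

end Count

section Main

variable {X Y : Type*} [TopologicalSpace X] [TopologicalSpace Y] {n : ℕ}

lemma hk (k : Fin (n + 1)) : (k : ℕ) + (n - (k : ℕ)) = n :=
  Nat.add_sub_cancel' (Nat.lt_succ_iff.mp k.isLt)

/-- The inverse map of the decomposition. -/
def Psi (X Y : Type*) [TopologicalSpace X] [TopologicalSpace Y] (n : ℕ)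
    (s : Σ k : Fin (n + 1), UnorderedConfig X (k : ℕ) × UnorderedConfig Y (n - (k : ℕ))) :
    UnorderedConfig (X ⊕ Y) n :=
  Quotient.liftOn₂ s.2.1 s.2.2
    (fun g f => Quotient.mk (configSetoid (X ⊕ Y) n) (combine (hk s.1) g f))
    (by
      rintro g f g' f' ⟨σ₁, hσ₁⟩ ⟨σ₂, hσ₂⟩
      refine Quotient.sound ⟨(e (hk s.1)).symm.trans ((σ₁.sumCongr σ₂).trans (e (hk s.1))), ?_⟩
      funext x
      simp only [Function.comp_apply, Equiv.trans_apply, combine_apply,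
        Equiv.symm_apply_apply]
      rcases hc : (e (hk s.1)).symm x with j | j <;>
        simp only [hc, Equiv.sumCongr_apply, Sum.map_inl, Sum.map_inr, Sum.elim_inl,
          Sum.elim_inr, Function.comp_apply]
      · exact congrArg Sum.inl (congrFun hσ₁ j)
      · exact congrArg Sum.inr (congrFun hσ₂ j))

@[simp] lemma Psi_mk (k : Fin (n + 1)) (g : Conf X (k : ℕ)) (f : Conf Y (n - (k : ℕ))) :
    Psi X Y n ⟨k, (Quotient.mk _ g, Quotient.mk _ f)⟩ =
      Quotient.mk (configSetoid (X ⊕ Y) n) (combine (hk k) g f) := rfl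

lemma continuous_Psi : Continuous (Psi X Y n) := by
  refine continuous_sigma fun k => ?_
  have hp : IsOpenQuotientMap
      (Prod.map (q X (k : ℕ)) (q Y (n - (k : ℕ)))) :=
    isOpenQuotientMap_q.prodMap isOpenQuotientMap_q
  rw [hp.isQuotientMap.continuous_iff]
  exact continuous_q.comp (continuous_combine (hk k))

lemma isOpenMap_Psi : IsOpenMap (Psi X Y n) := by
  intro U hU
  rw [← Set.iUnion_image_preimage_sigma_mk_eq_self U, Set.image_iUnion]
  refine isOpen_iUnion fun k => ?_
  rw [← Set.image_comp]
  set V : Set (UnorderedConfig X (k : ℕ) × UnorderedConfig Y (n - (k : ℕ))) :=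
    (@Sigma.mk (Fin (n + 1))
      (fun k => UnorderedConfig X (k : ℕ) × UnorderedConfig Y (n - (k : ℕ))) k) ⁻¹' U with hVdef
  have hV : IsOpen V := isOpen_sigma_iff.mp hU k
  have hps : Function.Surjective (Prod.map (q X (k : ℕ)) (q Y (n - (k : ℕ)))) :=
    Function.Surjective.prodMap surjective_q surjective_q
  have himg : (Psi X Y n ∘ Sigma.mk k) '' V =
      ((Psi X Y n ∘ Sigma.mk k) ∘ Prod.map (q X (k : ℕ)) (q Y (n - (k : ℕ)))) ''
        (Prod.map (q X (k : ℕ)) (q Y (n - (k : ℕ))) ⁻¹' V) := by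
    conv_rhs => rw [Set.image_comp, Set.image_preimage_eq _ hps]
  rw [himg]
  have hco : ((Psi X Y n ∘ Sigma.mk k) ∘ Prod.map (q X (k : ℕ)) (q Y (n - (k : ℕ)))) =
      (q (X ⊕ Y) n) ∘ (fun p : Conf X (k : ℕ) × Conf Y (n - (k : ℕ)) =>
        combine (hk k) p.1 p.2) := rfl
  rw [hco, Set.image_comp]
  refine isOpenMap_q _ (isOpenMap_combine (hk k) _ ?_)
  exact hV.preimage (continuous_q.prodMap continuous_q)

lemma surjective_Psi : Function.Surjective (Psi X Y n) := by
  classical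
  intro c
  obtain ⟨f, rfl⟩ := surjective_q c
  set p : Fin n → Prop := fun i => (f.1 i).isLeft = true with hpdef
  set k0 := Fintype.card {i // p i} with hk0
  have hk0le : k0 ≤ n := by
    have := Fintype.card_subtype_le p
    simpa using this
  have hcompl : Fintype.card {i // ¬ p i} = n - k0 := by
    rw [Fintype.card_subtype_compl]
    simp [hk0]
  have hcard : Fintype.card {i // p i} = k0 := hk0.symm
  set a : Fin k0 ≃ {i // p i} := (Fintype.equivFinOfCardEq hcard).symm with ha
  set b : Fin (n - k0) ≃ {i // ¬ p i} := (Fintype.equivFinOfCardEq hcompl).symm with hb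
  have hleft : ∀ j : Fin k0, ((f.1 (a j).1).isLeft = true) := fun j => (a j).2
  have hright : ∀ j : Fin (n - k0), ((f.1 (b j).1).isRight = true) := fun j => by
    have h2 := (b j).2
    simp only [hpdef] at h2
    rcases hfb : f.1 (b j).1 with x | y
    · exact absurd (by rw [hfb]; rfl) h2
    · rfl
  set g : Fin k0 → X := fun j => (f.1 (a j).1).getLeft (hleft j) with hgdef
  have hg : Function.Injective g := by
    intro j1 j2 hj
    have h1 : f.1 (a j1).1 = f.1 (a j2).1 := by
      rw [← Sum.inl_getLeft _ (hleft j1), ← Sum.inl_getLeft _ (hleft j2)]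
      exact congrArg Sum.inl hj
    exact a.injective (Subtype.ext (f.2 h1))
  set g' : Fin (n - k0) → Y := fun j => (f.1 (b j).1).getRight (hright j) with hg'def
  have hg' : Function.Injective g' := by
    intro j1 j2 hj
    have h1 : f.1 (b j1).1 = f.1 (b j2).1 := by
      rw [← Sum.inr_getRight _ (hright j1), ← Sum.inr_getRight _ (hright j2)]
      exact congrArg Sum.inr hj
    exact b.injective (Subtype.ext (f.2 h1))
  set kk : Fin (n + 1) := ⟨k0, Nat.lt_succ_of_le hk0le⟩ with hkk
  refine ⟨⟨kk, (Quotient.mk _ ⟨g, hg⟩, Quotient.mk _ ⟨g', hg'⟩)⟩, ?_⟩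
  rw [Psi_mk]
  have claim : f.1 ∘ ((e (hk kk)).symm.trans ((a.sumCongr b).trans (Equiv.sumCompl p))) =
      (combine (hk kk) ⟨g, hg⟩ ⟨g', hg'⟩).1 := by
    funext x
    simp only [Function.comp_apply, Equiv.trans_apply, combine_apply]
    rcases hc : (e (hk kk)).symm x with j | j <;>
      simp only [hc, Equiv.sumCongr_apply, Sum.map_inl, Sum.map_inr,
        Equiv.sumCompl_apply_inl, Equiv.sumCompl_apply_inr, Sum.elim_inl, Sum.elim_inr,
        Function.comp_apply]
    · exact (Sum.inl_getLeft _ (hleft j)).symm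
    · exact (Sum.inr_getRight _ (hright j)).symm
  refine Eq.symm (Quotient.sound ?_)
  exact ⟨_, claim⟩

lemma injective_Psi : Function.Injective (Psi X Y n) := by
  rintro ⟨k, ab⟩ ⟨k', ab'⟩ hab
  obtain ⟨a, b⟩ := ab
  obtain ⟨a', b'⟩ := ab'
  obtain ⟨g, rfl⟩ := surjective_q a
  obtain ⟨f, rfl⟩ := surjective_q b
  obtain ⟨g', rfl⟩ := surjective_q a'
  obtain ⟨f', rfl⟩ := surjective_q b'
  rw [show (q X (k : ℕ) g, q Y (n - (k : ℕ)) f) =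
      ((Quotient.mk _ g : UnorderedConfig X (k : ℕ)), (Quotient.mk _ f)) from rfl] at hab
  obtain ⟨σ, hσ⟩ := Quotient.exact hab
  have hkk : (k : ℕ) = (k' : ℕ) := by
    have h1 : cnt (combine (hk k') g' f') = (k' : ℕ) := cnt_combine _ _ _
    have h2 : cnt (combine (hk k') g' f') = (k : ℕ) := by
      have heq : (combine (hk k') g' f') =
          ⟨(combine (hk k) g f).1 ∘ σ, hσ ▸ (combine (hk k') g' f').2⟩ :=
        Subtype.ext hσ.symm
      rw [heq, cnt_precomp, cnt_combine]
    rw [← h2, h1]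
  have hkeq : k = k' := Fin.ext hkk
  subst hkeq
  set τ : Fin (k : ℕ) ⊕ Fin (n - (k : ℕ)) ≃ Fin (k : ℕ) ⊕ Fin (n - (k : ℕ)) :=
    ((e (hk k)).trans σ).trans (e (hk k)).symm with hτdef
  have hτ : ∀ w, Sum.elim (Sum.inl ∘ g.1) (Sum.inr ∘ f.1) (τ w)
      = Sum.elim (Sum.inl ∘ g'.1) (Sum.inr ∘ f'.1) w := by
    intro w
    have h3 := congrFun hσ ((e (hk k)) w)
    simp only [Function.comp_apply, combine_apply, Equiv.symm_apply_apply] at h3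
    simpa [hτdef] using h3
  have hl : ∀ j : Fin (k : ℕ), (τ (Sum.inl j)).isLeft = true := by
    intro j
    rcases hc : τ (Sum.inl j) with j' | j'
    · rfl
    · have h4 := hτ (Sum.inl j)
      rw [hc] at h4
      simp at h4
  have hr : ∀ j : Fin (n - (k : ℕ)), (τ (Sum.inr j)).isRight = true := by
    intro j
    rcases hc : τ (Sum.inr j) with j' | j'
    · have h4 := hτ (Sum.inr j)
      rw [hc] at h4
      simp at h4
    · rfl
  set τ₁ : Fin (k : ℕ) → Fin (k : ℕ) := fun j => (τ (Sum.inl j)).getLeft (hl j) with hτ₁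
  have hτ₁inl : ∀ j, Sum.inl (τ₁ j) = τ (Sum.inl j) := fun j => Sum.inl_getLeft _ _
  have hτ₁inj : Function.Injective τ₁ := by
    intro j1 j2 hj
    have : τ (Sum.inl j1) = τ (Sum.inl j2) := by
      rw [← hτ₁inl, ← hτ₁inl, hj]
    exact Sum.inl_injective (τ.injective this)
  set τ₂ : Fin (n - (k : ℕ)) → Fin (n - (k : ℕ)) :=
    fun j => (τ (Sum.inr j)).getRight (hr j) with hτ₂
  have hτ₂inr : ∀ j, Sum.inr (τ₂ j) = τ (Sum.inr j) := fun j => Sum.inr_getRight _ _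
  have hτ₂inj : Function.Injective τ₂ := by
    intro j1 j2 hj
    have : τ (Sum.inr j1) = τ (Sum.inr j2) := by
      rw [← hτ₂inr, ← hτ₂inr, hj]
    exact Sum.inr_injective (τ.injective this)
  have hgg : g.1 ∘ (Equiv.ofBijective τ₁ (Finite.injective_iff_bijective.mp hτ₁inj)) = g'.1 := by
    funext j
    refine Sum.inl_injective (β := Y) ?_
    have h5 := hτ (Sum.inl j)
    rw [← hτ₁inl j] at h5
    simpa using h5
  have hff : f.1 ∘ (Equiv.ofBijective τ₂ (Finite.injective_iff_bijective.mp hτ₂inj)) = f'.1 := by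
    funext j
    refine Sum.inr_injective (α := X) ?_
    have h5 := hτ (Sum.inr j)
    rw [← hτ₂inr j] at h5
    simpa using h5
  have e1 : (Quotient.mk (configSetoid X (k : ℕ)) g) = Quotient.mk _ g' :=
    Quotient.sound ⟨_, hgg⟩
  have e2 : (Quotient.mk (configSetoid Y (n - (k : ℕ))) f) = Quotient.mk _ f' :=
    Quotient.sound ⟨_, hff⟩
  exact congrArg (fun z : UnorderedConfig X (k : ℕ) × UnorderedConfig Y (n - (k : ℕ)) =>
    (⟨k, z⟩ : Σ k : Fin (n + 1), UnorderedConfig X (k : ℕ) × UnorderedConfig Y (n - (k : ℕ))))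
    (Prod.ext e1 e2)

end Main

end ConfigAux


/-- The unordered `n`-particle configuration space of a disjoint union `X ⊕ Y` decomposes,
up to homeomorphism, as the disjoint union over `k = 0, …, n` of the products
`C_k(X) × C_{n-k}(Y)`. -/
theorem unorderedConfig_disjoint_union (X Y : Type*) [TopologicalSpace X] [TopologicalSpace Y]
    (n : ℕ) :
    Nonempty (UnorderedConfig (X ⊕ Y) n ≃ₜ
      Σ k : Fin (n + 1), UnorderedConfig X (k : ℕ) × UnorderedConfig Y (n - (k : ℕ))) := by
  exact ⟨(Equiv.toHomeomorphOfContinuousOpen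
      (Equiv.ofBijective (ConfigAux.Psi X Y n)
        ⟨ConfigAux.injective_Psi, ConfigAux.surjective_Psi⟩)
      ConfigAux.continuous_Psi ConfigAux.isOpenMap_Psi).symm⟩
end
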